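/- arXiv:2309.10609 — 5 statements merged into one kernel-verified Lean document; each statement's English description precedes it below -/
import Mathlib

section
/- If $G$ is a (simple, undirected) graph with maximum degree at most $\Delta$ and $v$ is a vertex of $G$, then for each $m \in \mathbb{N}$ the number of subtrees of $G$ with exactly $m$ vertices that contain $v$ is at most $(e\Delta)^{m-1}$. -/
/-!
Explore a connected set `S ∋ v` greedily from `v`, each step adding the least vertex of `S`
adjacent to the part already explored. Record every vertex `w ≠ v` of `S` by the pair `(j, r)`,
where `j` is the first step whose vertex `x` is adjacent to `w` and `r` is the rank of `w` among
the neighbours of `x`. The first `i + 1` explored vertices together with the pairs with `j ≤ i`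
determine the candidates for the next step, so the pairs determine the exploration and hence `S`.
For `#S = m` they form an `(m - 1)`-subset of `[0, m - 1) × [0, Δ)`, since `w` is adjacent to an
earlier vertex when it is added; hence there are at most
`C((m - 1)Δ, m - 1) ≤ ((m - 1)Δ)^(m - 1) / (m - 1)! ≤ (eΔ)^(m - 1)` such sets.
-/

open Finset
open scoped Nat

lemma Finset.card_filter_lt_lt_card {α : Type*} [LinearOrder α] {s : Finset α} {a : α}
    (ha : a ∈ s) : #{x ∈ s | x < a} < #s :=
  card_lt_card (filter_ssubset.2 ⟨a, ha, lt_irrefl a⟩)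

lemma Finset.strictMonoOn_card_filter_lt {α : Type*} [LinearOrder α] (s : Finset α) :
    StrictMonoOn (fun a => #{x ∈ s | x < a}) s := by
  intro a ha b _ hab
  refine card_lt_card ⟨monotone_filter_right s fun _ _ hx => hx.trans hab, fun h => ?_⟩
  simpa using h (mem_filter.2 ⟨ha, hab⟩)

lemma Nat.choose_mul_le_exp_one_mul_pow (k Δ : ℕ) :
    ((k * Δ).choose k : ℝ) ≤ (Real.exp 1 * Δ) ^ k := by
  calc ((k * Δ).choose k : ℝ) ≤ ((k * Δ : ℕ) : ℝ) ^ k / k ! := Nat.choose_le_pow_div k _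
    _ = (k : ℝ) ^ k / k ! * (Δ : ℝ) ^ k := by push_cast; ring
    _ ≤ Real.exp k * (Δ : ℝ) ^ k := by
      gcongr; exact Real.pow_div_factorial_le_exp _ (Nat.cast_nonneg k) k
    _ = (Real.exp 1 * Δ) ^ k := by rw [← mul_one (k : ℝ), Real.exp_nat_mul, mul_pow]

namespace SimpleGraph

variable {V : Type*} [LinearOrder V]

section Rank

variable (G : SimpleGraph V) [G.LocallyFinite]

def nbrRank (x w : V) : ℕ := #{y ∈ G.neighborFinset x | y < w}

variable {G}

lemma nbrRank_lt_degree {x w : V} (h : G.Adj x w) : G.nbrRank x w < G.degree x := by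
  rw [← card_neighborFinset_eq_degree]
  exact card_filter_lt_lt_card ((mem_neighborFinset _ _ _).2 h)

lemma nbrRank_injOn (x : V) : Set.InjOn (G.nbrRank x) (G.neighborSet x) := by
  rw [← coe_neighborFinset]
  exact (strictMonoOn_card_filter_lt _).injOn

end Rank

variable (G : SimpleGraph V) [DecidableRel G.Adj]

def boundaryIn (S P : Finset V) : Finset V := {w ∈ S \ P | ∃ p ∈ P, G.Adj p w}

def greedyNext (v : V) (S P : Finset V) : V :=
  if h : (G.boundaryIn S P).Nonempty then (G.boundaryIn S P).min' h else v

def greedyVisited (v : V) (S : Finset V) : ℕ → Finset V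
  | 0 => {v}
  | i + 1 => insert (G.greedyNext v S (greedyVisited v S i)) (greedyVisited v S i)

def greedySeq (v : V) (S : Finset V) : ℕ → V
  | 0 => v
  | i + 1 => G.greedyNext v S (G.greedyVisited v S i)

noncomputable def firstNbrIdx (v : V) (S : Finset V) (w : V) : ℕ :=
  sInf {j | G.Adj (G.greedySeq v S j) w}

variable {G}

lemma greedyVisited_eq_image (v : V) (S : Finset V) (i : ℕ) :
    G.greedyVisited v S i = (range (i + 1)).image (G.greedySeq v S) := by
  induction i with
  | zero => rfl
  | succ i ih => rw [range_add_one, image_insert, ← ih]; rfl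

lemma mem_greedyVisited_self (v : V) (S : Finset V) (i : ℕ) : v ∈ G.greedyVisited v S i := by
  rw [greedyVisited_eq_image]
  exact mem_image_of_mem _ (mem_range.2 i.succ_pos)

lemma boundaryIn_nonempty {S P : Finset V} (hconn : (G.induce (S : Set V)).Connected)
    (hPS : P ⊆ S) (hP : P.Nonempty) (hcard : #P < #S) : (G.boundaryIn S P).Nonempty := by
  obtain ⟨p, hp⟩ := hP
  obtain ⟨w, hwS, hwP⟩ := exists_mem_notMem_of_card_lt_card hcard
  obtain ⟨walk⟩ := hconn.preconnected ⟨p, hPS hp⟩ ⟨w, hwS⟩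
  obtain ⟨d, -, hd, hd'⟩ := walk.exists_boundary_dart {x | (x : V) ∈ P} hp hwP
  exact ⟨d.snd, mem_filter.2 ⟨mem_sdiff.2 ⟨d.snd.2, hd'⟩, d.fst, hd, d.adj⟩⟩

lemma greedyNext_mem_boundaryIn {v : V} {S P : Finset V} (h : (G.boundaryIn S P).Nonempty) :
    G.greedyNext v S P ∈ G.boundaryIn S P := by
  rw [greedyNext, dif_pos h]
  exact min'_mem _ _

lemma firstNbrIdx_le {v w : V} {S : Finset V} {j : ℕ} (h : G.Adj (G.greedySeq v S j) w) :
    G.firstNbrIdx v S w ≤ j :=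
  Nat.sInf_le h

lemma adj_greedySeq_firstNbrIdx {v w : V} {S : Finset V} {j : ℕ}
    (h : G.Adj (G.greedySeq v S j) w) : G.Adj (G.greedySeq v S (G.firstNbrIdx v S w)) w :=
  Nat.sInf_mem (s := {j | G.Adj (G.greedySeq v S j) w}) ⟨j, h⟩

section Connected

variable {v : V} {S : Finset V} (hv : v ∈ S) (hconn : (G.induce (S : Set V)).Connected)
include hv hconn

lemma greedyVisited_subset_and_card {i : ℕ} (hi : i < #S) :
    G.greedyVisited v S i ⊆ S ∧ #(G.greedyVisited v S i) = i + 1 := by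
  induction i with
  | zero => exact ⟨singleton_subset_iff.2 hv, rfl⟩
  | succ i ih =>
    obtain ⟨hsub, hcard⟩ := ih (by omega)
    have hnext := greedyNext_mem_boundaryIn (v := v) (boundaryIn_nonempty hconn hsub
      ⟨v, mem_greedyVisited_self v S i⟩ (by omega))
    obtain ⟨hnS, hnP⟩ := mem_sdiff.1 (mem_filter.1 hnext).1
    exact ⟨insert_subset hnS hsub, by rw [greedyVisited, card_insert_of_notMem hnP, hcard]⟩

lemma greedySeq_succ_mem_boundaryIn {i : ℕ} (hi : i + 1 < #S) :
    G.greedySeq v S (i + 1) ∈ G.boundaryIn S (G.greedyVisited v S i) := by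
  obtain ⟨hsub, hcard⟩ := greedyVisited_subset_and_card hv hconn (i := i) (by omega)
  exact greedyNext_mem_boundaryIn (boundaryIn_nonempty hconn hsub
    ⟨v, mem_greedyVisited_self v S i⟩ (by omega))

lemma greedyVisited_card_sub_one : G.greedyVisited v S (#S - 1) = S := by
  have hpos : 0 < #S := card_pos.2 ⟨v, hv⟩
  obtain ⟨hsub, hcard⟩ := greedyVisited_subset_and_card hv hconn (i := #S - 1) (by omega)
  exact eq_of_subset_of_card_le hsub (by omega)

lemma exists_adj_greedySeq {w : V} (hw : w ∈ S.erase v) :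
    ∃ j < #S - 1, G.Adj (G.greedySeq v S j) w := by
  obtain ⟨hwv, hwS⟩ := mem_erase.1 hw
  rw [← greedyVisited_card_sub_one hv hconn, greedyVisited_eq_image] at hwS
  obtain ⟨t, ht, rfl⟩ := mem_image.1 hwS
  rw [mem_range] at ht
  obtain _ | i := t
  · exact absurd rfl hwv
  obtain ⟨p, hp, hadj⟩ :=
    (mem_filter.1 (greedySeq_succ_mem_boundaryIn hv hconn (i := i) (by omega))).2
  rw [greedyVisited_eq_image] at hp
  obtain ⟨j, hj, rfl⟩ := mem_image.1 hp
  exact ⟨j, by rw [mem_range] at hj; omega, hadj⟩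

lemma firstNbrIdx_lt_and_adj {w : V} (hw : w ∈ S.erase v) :
    G.firstNbrIdx v S w < #S - 1 ∧ G.Adj (G.greedySeq v S (G.firstNbrIdx v S w)) w := by
  obtain ⟨j, hj, hadj⟩ := exists_adj_greedySeq hv hconn hw
  exact ⟨(firstNbrIdx_le hadj).trans_lt hj, adj_greedySeq_firstNbrIdx hadj⟩

end Connected

section Code

variable [G.LocallyFinite]

variable (G) in
noncomputable def greedyCode (v : V) (S : Finset V) : Finset (ℕ × ℕ) :=
  (S.erase v).image fun w =>
    (G.firstNbrIdx v S w, G.nbrRank (G.greedySeq v S (G.firstNbrIdx v S w)) w)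

section Connected

variable {v : V} {S : Finset V} (hv : v ∈ S) (hconn : (G.induce (S : Set V)).Connected)
include hv hconn

lemma card_greedyCode : #(G.greedyCode v S) = #S - 1 := by
  rw [greedyCode, Finset.card_image_of_injOn, card_erase_of_mem hv]
  intro w hw w' hw' h
  obtain ⟨hj, hrank⟩ := Prod.mk.inj h
  have hadj := (firstNbrIdx_lt_and_adj hv hconn hw).2
  have hadj' := (firstNbrIdx_lt_and_adj hv hconn hw').2
  rw [← hj] at hadj' hrank
  exact nbrRank_injOn _ hadj hadj' hrank

lemma greedyCode_subset {Δ : ℕ} (hΔ : ∀ x, G.degree x ≤ Δ) :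
    G.greedyCode v S ⊆ range (#S - 1) ×ˢ range Δ := by
  simp only [greedyCode, image_subset_iff, mem_product, mem_range]
  intro w hw
  obtain ⟨hlt, hadj⟩ := firstNbrIdx_lt_and_adj hv hconn hw
  exact ⟨hlt, (nbrRank_lt_degree hadj).trans_le (hΔ _)⟩

lemma mem_boundaryIn_greedyVisited_iff {i : ℕ} {w : V} :
    w ∈ G.boundaryIn S (G.greedyVisited v S i) ↔
      w ∉ G.greedyVisited v S i ∧ ∃ j ≤ i, G.Adj (G.greedySeq v S j) w ∧
        (j, G.nbrRank (G.greedySeq v S j) w) ∈ G.greedyCode v S := by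
  simp only [boundaryIn, mem_filter, mem_sdiff]
  constructor
  · rintro ⟨⟨hwS, hwP⟩, p, hp, hadj⟩
    rw [greedyVisited_eq_image] at hp
    obtain ⟨j, hj, rfl⟩ := mem_image.1 hp
    have hwv : w ≠ v := by
      rintro rfl
      exact hwP (mem_greedyVisited_self _ S i)
    refine ⟨hwP, G.firstNbrIdx v S w, ?_, adj_greedySeq_firstNbrIdx hadj,
      mem_image_of_mem _ (mem_erase.2 ⟨hwv, hwS⟩)⟩
    exact (firstNbrIdx_le hadj).trans (Nat.lt_succ_iff.1 (mem_range.1 hj))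
  · rintro ⟨hwP, j, hj, hadj, hcode⟩
    obtain ⟨w', hw', hjw'⟩ := mem_image.1 hcode
    obtain ⟨hj', hrank⟩ := Prod.mk.inj hjw'
    have hadj' := (firstNbrIdx_lt_and_adj hv hconn hw').2
    rw [hj'] at hadj' hrank
    obtain rfl := nbrRank_injOn _ hadj' hadj hrank
    refine ⟨⟨(mem_erase.1 hw').2, hwP⟩, G.greedySeq v S j, ?_, hadj⟩
    rw [greedyVisited_eq_image]
    exact mem_image_of_mem _ (mem_range.2 (Nat.lt_succ_of_le hj))

end Connected

lemma eq_of_greedyCode_eq {v : V} {S S' : Finset V} (hv : v ∈ S)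
    (hconn : (G.induce (S : Set V)).Connected) (hv' : v ∈ S')
    (hconn' : (G.induce (S' : Set V)).Connected) (hcard : #S = #S')
    (hcode : G.greedyCode v S = G.greedyCode v S') : S = S' := by
  have hseq : ∀ i < #S, G.greedySeq v S i = G.greedySeq v S' i := by
    intro i
    induction i using Nat.strong_induction_on with
    | _ i ih =>
    obtain _ | i := i
    · exact fun _ => rfl
    intro hi
    have hvisited : G.greedyVisited v S i = G.greedyVisited v S' i := by
      rw [greedyVisited_eq_image, greedyVisited_eq_image]
      exact image_congr fun j hj => ih j (by simp at hj; omega) (by simp at hj; omega)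
    have hboundary : G.boundaryIn S (G.greedyVisited v S i) =
        G.boundaryIn S' (G.greedyVisited v S' i) := by
      ext w
      rw [mem_boundaryIn_greedyVisited_iff hv hconn, mem_boundaryIn_greedyVisited_iff hv' hconn',
        hvisited, hcode]
      refine and_congr_right fun _ => exists_congr fun j => and_congr_right fun hj => ?_
      rw [ih j (by omega) (by omega)]
    simp only [greedySeq, greedyNext, hboundary]
  have hpos : 0 < #S := card_pos.2 ⟨v, hv⟩
  calc S = G.greedyVisited v S (#S - 1) := (greedyVisited_card_sub_one hv hconn).symm
    _ = G.greedyVisited v S' (#S' - 1) := by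
      rw [← hcard, greedyVisited_eq_image, greedyVisited_eq_image]
      exact image_congr fun j hj => hseq j (by simp at hj; omega)
    _ = S' := greedyVisited_card_sub_one hv' hconn'

end Code

end SimpleGraph

theorem stmt1_general {V : Type*} [Fintype V] (G : SimpleGraph V)
    [DecidableRel G.Adj] (Δ : ℕ) (hΔ : ∀ v : V, G.degree v ≤ Δ) (v : V) (m : ℕ) :
    ({S : Finset V | S.card = m ∧ v ∈ S ∧ (G.induce (S : Set V)).Connected}.ncard : ℝ) ≤
      (Real.exp 1 * Δ) ^ (m - 1) := by
  let : LinearOrder V := LinearOrder.lift' (Fintype.equivFin V) (Fintype.equivFin V).injective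
  set 𝒮 := {S : Finset V | S.card = m ∧ v ∈ S ∧ (G.induce (S : Set V)).Connected}
  set codes := (range (m - 1) ×ˢ range Δ).powersetCard (m - 1)
  have hcode : ∀ S ∈ 𝒮, G.greedyCode v S ∈ (codes : Set (Finset (ℕ × ℕ))) := by
    rintro S ⟨hS, hv, hconn⟩
    exact mem_powersetCard.2 ⟨hS ▸ SimpleGraph.greedyCode_subset hv hconn hΔ,
      hS ▸ SimpleGraph.card_greedyCode hv hconn⟩
  have hinj : Set.InjOn (G.greedyCode v) 𝒮 := by
    rintro S ⟨hS, hv, hconn⟩ S' ⟨hS', hv', hconn'⟩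
    exact SimpleGraph.eq_of_greedyCode_eq hv hconn hv' hconn' (hS.trans hS'.symm)
  calc (𝒮.ncard : ℝ) ≤ #codes := by
        exact_mod_cast (Set.ncard_coe_finset codes) ▸
          Set.ncard_le_ncard_of_injOn _ hcode hinj codes.finite_toSet
    _ = ((m - 1) * Δ).choose (m - 1) := by simp [codes, card_powersetCard]
    _ ≤ (Real.exp 1 * Δ) ^ (m - 1) := Nat.choose_mul_le_exp_one_mul_pow _ _

/-- If `G` is a graph with maximum degree at most `Δ`, then for each `m` the
number of sets of `m` vertices containing a given vertex `v` whose induced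
subgraph is connected (i.e. subtrees of order `m` through `v`) is at most
`(eΔ)^(m-1)`. -/
theorem stmt1 {V : Type*} [Fintype V] [DecidableEq V] (G : SimpleGraph V)
    [DecidableRel G.Adj] (Δ : ℕ) (hΔ : ∀ v : V, G.degree v ≤ Δ) (v : V) (m : ℕ) :
    ({S : Finset V | S.card = m ∧ v ∈ S ∧ (G.induce (S : Set V)).Connected}.ncard : ℝ) ≤
      (Real.exp 1 * Δ) ^ (m - 1) :=
  stmt1_general G Δ hΔ v m
end

section
/- For every integer $K \geq 2$, the function $f(K) = \frac{\log(K-1)}{(K-1)(\log K - \log(K-1))}$ (with $f(2)=0$ by the convention $\log 1 = 0$) satisfies: $f$ is monotonically increasing on integers $K \geq 2$, and for all integers $n \geq 2$, if $K \leq \sqrt{n}$ then $f(K) \leq n$. -/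
/-!
Write `h k = (k - 1) (log k - log (k - 1))`, so that `f K = log (K - 1) / h K`. Since
`log k - log (k - 1) ≥ 1 / k`, we have `h k ≥ 1 / 2`, hence `f K ≤ 2 log (K - 1) ≤ log n ≤ n`.
Monotonicity `f K ≤ f (K + 1)` is equivalent to
`log (K - 1) (h (K + 1) - h K) ≤ (log K - log (K - 1)) h K`. Expanding `log (1 - 1 / k)` to third
order shows `h (k + 1) - h k ≤ 2 / k²`, while the right-hand side is at least `(K - 1) / K²`;
`log (K - 1) ≤ (K - 1) / 2` closes the gap.
-/

open Real

lemma abs_log_sub_log_sub_one_sub_le {k : ℝ} (hk : 1 < k) :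
    |log k - log (k - 1) - (1 / k + 1 / (2 * k ^ 2) + 1 / (3 * k ^ 3))| ≤
      1 / (k ^ 3 * (k - 1)) := by
  have hk0 : 0 < k := by linarith
  have hx : |1 / k| < 1 := by rw [abs_of_pos (one_div_pos.2 hk0)]; exact (div_lt_one hk0).2 hk
  have hlog : log (1 - 1 / k) = log (k - 1) - log k := by
    rw [← log_div (by linarith) hk0.ne']; congr 1; field_simp
  have hseries : log k - log (k - 1) - (1 / k + 1 / (2 * k ^ 2) + 1 / (3 * k ^ 3)) =
      -((∑ i ∈ Finset.range 3, (1 / k) ^ (i + 1) / (i + 1)) + log (1 - 1 / k)) := by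
    simp only [Finset.sum_range_succ, Finset.sum_range_zero, hlog]; push_cast; ring
  have hrem : |1 / k| ^ (3 + 1) / (1 - |1 / k|) = 1 / (k ^ 3 * (k - 1)) := by
    rw [abs_of_pos (one_div_pos.2 hk0), div_pow, one_pow, one_sub_div hk0.ne']; field_simp
  rw [hseries, abs_neg, ← hrem]
  exact abs_log_sub_add_sum_range_le hx 3

lemma one_div_le_log_sub_log_sub_one {k : ℝ} (hk : 1 < k) : 1 / k ≤ log k - log (k - 1) := by
  have hk0 : 0 < k := by linarith
  have h := one_sub_inv_le_log_of_pos (div_pos hk0 (by linarith : 0 < k - 1))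
  rwa [log_div hk0.ne' (by linarith), inv_div, one_sub_div hk0.ne', sub_sub_cancel] at h

lemma log_le_half_self {x : ℝ} (hx : 0 < x) : log x ≤ x / 2 := by
  have hsqrt : log (√x) ≤ √x - 1 := log_le_sub_one_of_pos (sqrt_pos.2 hx)
  rw [log_sqrt hx.le] at hsqrt
  nlinarith [sq_nonneg (√x - 2), sq_sqrt hx.le]

noncomputable def logGap (k : ℝ) : ℝ := (k - 1) * (log k - log (k - 1))

lemma logGap_pos {k : ℝ} (hk : 1 < k) : 0 < logGap k :=
  mul_pos (by linarith) ((one_div_pos.2 (by linarith)).trans_le (one_div_le_log_sub_log_sub_one hk))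

lemma one_half_le_logGap {k : ℝ} (hk : 2 ≤ k) : 1 / 2 ≤ logGap k :=
  calc 1 / 2 ≤ (k - 1) * (1 / k) := by rw [mul_one_div, le_div_iff₀ (by linarith)]; linarith
    _ ≤ logGap k := mul_le_mul_of_nonneg_left (one_div_le_log_sub_log_sub_one (by linarith))
        (by linarith)

lemma logGap_succ_sub_logGap_le {k : ℝ} (hk : 2 ≤ k) : logGap (k + 1) - logGap k ≤ 2 / k ^ 2 := by
  have hk0 : 0 < k := by linarith
  have hk1 : 0 < k - 1 := by linarith
  have hcur := abs_le.1 (abs_log_sub_log_sub_one_sub_le (k := k) (by linarith))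
  have hnext := abs_le.1 (abs_log_sub_log_sub_one_sub_le (k := k + 1) (by linarith))
  rw [add_sub_cancel_right] at hnext
  unfold logGap
  rw [add_sub_cancel_right]
  calc k * (log (k + 1) - log k) - (k - 1) * (log k - log (k - 1))
      ≤ k * (1 / (k + 1) + 1 / (2 * (k + 1) ^ 2) + 1 / (3 * (k + 1) ^ 3) + 1 / ((k + 1) ^ 3 * k))
        - (k - 1) * (1 / k + 1 / (2 * k ^ 2) + 1 / (3 * k ^ 3) - 1 / (k ^ 3 * (k - 1))) :=
        sub_le_sub (mul_le_mul_of_nonneg_left (by linarith) hk0.le)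
          (mul_le_mul_of_nonneg_left (by linarith) hk1.le)
    _ ≤ 2 / k ^ 2 := by
        field_simp
        nlinarith [pow_pos hk0 3, pow_pos hk0 4, pow_pos hk0 5, pow_pos hk0 6]

lemma log_div_logGap_le_succ {k : ℝ} (hk : 2 ≤ k) :
    log (k - 1) / logGap k ≤ log k / logGap (k + 1) := by
  have hk1 : 0 < k - 1 := by linarith
  have hstep := one_div_le_log_sub_log_sub_one (k := k) (by linarith)
  have hlog_nonneg : 0 ≤ log (k - 1) := log_nonneg (by linarith)
  have hkey : log (k - 1) * (logGap (k + 1) - logGap k) ≤ (log k - log (k - 1)) * logGap k :=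
    calc _ ≤ log (k - 1) * (2 / k ^ 2) :=
          mul_le_mul_of_nonneg_left (logGap_succ_sub_logGap_le hk) hlog_nonneg
      _ ≤ (k - 1) / 2 * (2 / k ^ 2) := by gcongr; exact log_le_half_self hk1
      _ = 1 / k * ((k - 1) * (1 / k)) := by field_simp
      _ ≤ (log k - log (k - 1)) * logGap k := by
          unfold logGap; gcongr; exact (one_div_pos.2 (by linarith)).le.trans hstep
  rw [div_le_div_iff₀ (logGap_pos (by linarith)) (logGap_pos (by linarith))]
  linear_combination hkey

lemma log_div_logGap_le_two_mul_log {k : ℝ} (hk : 2 ≤ k) :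
    log (k - 1) / logGap k ≤ 2 * log (k - 1) := by
  rw [div_le_iff₀ (logGap_pos (by linarith))]
  nlinarith [log_nonneg (by linarith : 1 ≤ k - 1), one_half_le_logGap hk]

/-- The function `f(K) = log(K-1)/((K-1)(log K - log (K-1)))` is monotonically
increasing on integers `K ≥ 2`, and for all integers `n ≥ 2`, if `K ≤ √n` then
`f(K) ≤ n`. -/
theorem stmt4 (f : ℕ → ℝ)
    (hf : ∀ K : ℕ, f K =
      Real.log ((K : ℝ) - 1) / (((K : ℝ) - 1) * (Real.log K - Real.log ((K : ℝ) - 1)))) :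
    (∀ K : ℕ, 2 ≤ K → f K ≤ f (K + 1)) ∧
    (∀ n K : ℕ, 2 ≤ n → 2 ≤ K → (K : ℝ) ≤ Real.sqrt n → f K ≤ n) := by
  have hf' : ∀ K : ℕ, f K = log ((K : ℝ) - 1) / logGap K := hf
  refine ⟨fun K hK => ?_, fun n K _ hK hKn => ?_⟩
  · rw [hf', hf', Nat.cast_succ, add_sub_cancel_right]
    exact log_div_logGap_le_succ (by exact_mod_cast hK)
  · have hK' : (2 : ℝ) ≤ K := by exact_mod_cast hK
    calc f K ≤ 2 * log ((K : ℝ) - 1) := hf' K ▸ log_div_logGap_le_two_mul_log hK'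
      _ ≤ 2 * log (√n) := by gcongr <;> linarith
      _ = log n := by rw [log_sqrt (Nat.cast_nonneg n)]; ring
      _ ≤ n := log_le_self (Nat.cast_nonneg n)
end

section
/- For $2 \leq m \leq n/2$ and $k_1 \leq k_2 \leq \dots \leq k_n$ with all $k_i \geq 2$ and $K = \max_i k_i$: if $K \leq 2^{n/12}$ then $\prod_{i=n-m+1}^{n} k_i^{1/2} \leq \prod_{i=1}^{n-m} k_i^{m/3 - 1/2}$, equivalently $\prod_{i=1}^{n-m} k_i^{-m/3} \leq \prod_{i=1}^{n} k_i^{-1/2}$. -/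
/-!
The `m` largest factors are at most `K ≤ 2^(n/12)` and the `n - m` smallest at least `2`, so the
first inequality reduces to the exponent inequality `n m / 24 ≤ (n - m) (m/3 - 1/2)`; the second
is the first one rearranged.
-/

open Finset

lemma Fin.card_filter_le_val {n j : ℕ} : #{i : Fin n | j ≤ (i : ℕ)} = n - j := by
  have := card_filter_add_card_filter_not (s := (univ : Finset (Fin n))) fun i => (i : ℕ) < j
  simp only [not_lt, card_univ, Fintype.card_fin, Fin.card_filter_val_lt] at this
  omega

/-- Rearranged, this is the paper's `(n - m) (2/3 - 1/m) ≥ n/12`. -/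
lemma mul_div_24_le_sub_mul_sub {n m : ℝ} (hm : 2 ≤ m) (hmn : 2 * m ≤ n) :
    n * m / 24 ≤ (n - m) * (m / 3 - 1 / 2) := by
  nlinarith [mul_nonneg (sub_nonneg.2 hmn) (sub_nonneg.2 hm)]

lemma rpow_half_le_rpow_of_le_pow {n m : ℕ} {P Q : ℝ} (hm : 2 ≤ m) (hmn : 2 * m ≤ n)
    (hQ0 : 0 ≤ Q) (hQ : Q ≤ ((2 : ℝ) ^ ((n : ℝ) / 12)) ^ m) (hP : 2 ^ (n - m) ≤ P) :
    Q ^ (1 / 2 : ℝ) ≤ P ^ ((m : ℝ) / 3 - 1 / 2) := by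
  have hm' : (2 : ℝ) ≤ m := by exact_mod_cast hm
  have hmn' : 2 * (m : ℝ) ≤ n := by exact_mod_cast hmn
  calc Q ^ (1 / 2 : ℝ)
      ≤ (((2 : ℝ) ^ ((n : ℝ) / 12)) ^ m) ^ (1 / 2 : ℝ) := by gcongr
    _ = 2 ^ ((n : ℝ) * m / 24) := by
      rw [← Real.rpow_natCast, ← Real.rpow_mul (by positivity), ← Real.rpow_mul (by norm_num)]
      ring_nf
    _ ≤ 2 ^ (((n : ℝ) - m) * (m / 3 - 1 / 2)) :=
      Real.rpow_le_rpow_of_exponent_le one_le_two (mul_div_24_le_sub_mul_sub hm' hmn')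
    _ = ((2 : ℝ) ^ (n - m)) ^ ((m : ℝ) / 3 - 1 / 2) := by
      rw [Real.rpow_mul zero_le_two, ← Nat.cast_sub (by omega), Real.rpow_natCast]
    _ ≤ P ^ ((m : ℝ) / 3 - 1 / 2) := by gcongr; linarith

lemma rpow_neg_le_mul_rpow_neg {P Q p q : ℝ} (hP : 0 < P) (hQ : 0 < Q)
    (h : Q ^ p ≤ P ^ (q - p)) : P ^ (-q) ≤ (P * Q) ^ (-p) := by
  rw [Real.rpow_sub hP, le_div_iff₀ (Real.rpow_pos_of_pos hP p)] at h
  rw [Real.rpow_neg hP.le, Real.rpow_neg (mul_pos hP hQ).le,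
    inv_le_inv₀ (Real.rpow_pos_of_pos hP q) (Real.rpow_pos_of_pos (mul_pos hP hQ) p),
    Real.mul_rpow hP.le hQ.le, mul_comm]
  exact h

theorem stmt12_general (n m : ℕ) (hm : 2 ≤ m) (hmn : 2 * m ≤ n)
    (k : Fin n → ℕ) (hk : ∀ i, 2 ≤ k i)
    (K : ℕ) (hKub : ∀ i, k i ≤ K)
    (hKn : (K : ℝ) ≤ (2 : ℝ) ^ ((n : ℝ) / 12)) :
    (∏ i ∈ univ.filter (fun i : Fin n => n - m ≤ (i : ℕ)), (k i : ℝ) ^ ((1 : ℝ) / 2) ≤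
      ∏ i ∈ univ.filter (fun i : Fin n => (i : ℕ) < n - m), (k i : ℝ) ^ ((m : ℝ) / 3 - 1 / 2)) ∧
    (∏ i ∈ univ.filter (fun i : Fin n => (i : ℕ) < n - m), (k i : ℝ) ^ (-(m : ℝ) / 3) ≤
      ∏ i : Fin n, (k i : ℝ) ^ (-(1 : ℝ) / 2)) := by
  set H := univ.filter (fun i : Fin n => (i : ℕ) < n - m)
  set T := univ.filter (fun i : Fin n => n - m ≤ (i : ℕ))
  have hprod_rpow (s : Finset (Fin n)) (r : ℝ) :
      ∏ i ∈ s, (k i : ℝ) ^ r = ((∏ i ∈ s, k i : ℕ) : ℝ) ^ r := by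
    push_cast
    exact Real.finsetProd_rpow s _ (fun i _ => by positivity) r
  have hprod_pos (s : Finset (Fin n)) : (0 : ℝ) < ∏ i ∈ s, k i := by
    exact_mod_cast prod_pos fun i _ => (by linarith [hk i] : 0 < k i)
  have hdisj : Disjoint H T := disjoint_filter.2 fun i _ => by omega
  have hsplit : univ = H ∪ T := by
    ext i; simp only [mem_univ, mem_union, mem_filter, true_and, H, T, true_iff]; omega
  have hcardH : #H = n - m := by simp [H, Fin.card_filter_val_lt]
  have hcardT : #T = m := by simp only [T, Fin.card_filter_le_val]; omega
  have hT : ∏ i ∈ T, k i ≤ K ^ m := hcardT ▸ prod_le_pow_card _ _ _ fun i _ => hKub i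
  have hH : 2 ^ (n - m) ≤ ∏ i ∈ H, k i := hcardH ▸ pow_card_le_prod _ _ _ fun i _ => hk i
  have h1 : ∏ i ∈ T, (k i : ℝ) ^ ((1 : ℝ) / 2) ≤ ∏ i ∈ H, (k i : ℝ) ^ ((m : ℝ) / 3 - 1 / 2) := by
    rw [hprod_rpow, hprod_rpow]
    refine rpow_half_le_rpow_of_le_pow hm hmn (by positivity) ?_ (by exact_mod_cast hH)
    calc ((∏ i ∈ T, k i : ℕ) : ℝ) ≤ (K : ℝ) ^ m := by exact_mod_cast hT
      _ ≤ _ := by gcongr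
  refine ⟨h1, ?_⟩
  rw [hprod_rpow, hprod_rpow] at h1
  rw [hprod_rpow, hprod_rpow, hsplit, prod_union hdisj,
    Nat.cast_mul, neg_div, neg_div]
  exact rpow_neg_le_mul_rpow_neg (hprod_pos H) (hprod_pos T) h1

/-- For `2 ≤ m ≤ n/2` and `2 ≤ k₁ ≤ ⋯ ≤ kₙ` with `K = max kᵢ ≤ 2^(n/12)`:
`∏_{i=n-m+1}^n kᵢ^(1/2) ≤ ∏_{i=1}^{n-m} kᵢ^(m/3 - 1/2)`, equivalently
`∏_{i=1}^{n-m} kᵢ^(-m/3) ≤ ∏_{i=1}^n kᵢ^(-1/2)`. -/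
theorem stmt12 (n m : ℕ) (hm : 2 ≤ m) (hmn : 2 * m ≤ n)
    (k : Fin n → ℕ) (hk : ∀ i, 2 ≤ k i)
    (hmono : ∀ i j : Fin n, i ≤ j → k i ≤ k j)
    (K : ℕ) (hKub : ∀ i, k i ≤ K) (hKmem : ∃ i, k i = K)
    (hKn : (K : ℝ) ≤ (2 : ℝ) ^ ((n : ℝ) / 12)) :
    (∏ i ∈ univ.filter (fun i : Fin n => n - m ≤ (i : ℕ)), (k i : ℝ) ^ ((1 : ℝ) / 2) ≤
      ∏ i ∈ univ.filter (fun i : Fin n => (i : ℕ) < n - m), (k i : ℝ) ^ ((m : ℝ) / 3 - 1 / 2)) ∧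
    (∏ i ∈ univ.filter (fun i : Fin n => (i : ℕ) < n - m), (k i : ℝ) ^ (-(m : ℝ) / 3) ≤
      ∏ i : Fin n, (k i : ℝ) ^ (-(1 : ℝ) / 2)) :=
  stmt12_general n m hm hmn k hk K hKub hKn
end

section
/- Let $k_1, k_2 \geq 2$. In the random directed graph $\vec{L}(2,(k_1,k_2))$ on vertex set $[k_1] \times [k_2]$, where each row and each column independently chooses a uniform random winner and all edges within that row/column point to the winner, the probability that the graph contains a directed cycle is at least $1/8$. -/
/-!
Write `g b = ω.2 (ω.1 b)` for the column chosen by the row that wins column `b`. If `g` swaps two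
columns `b ≠ b'`, their winning rows `a = ω.1 b`, `a' = ω.1 b'` differ and
`(a, b) → (a, b') → (a', b') → (a', b) → (a, b)` is a directed cycle. For a fixed pair the swap has
probability `(1 - 1/k₁) / k₂²`; swaps of two overlapping pairs are incompatible, and swaps of two
disjoint pairs occur together with probability at most `1 / k₂⁴`. The second Bonferroni inequality
then bounds the probability of some swap below by
`C(k₂,2) (1 - 1/k₁) / k₂² - C(k₂,2) C(k₂-2,2) / (2 k₂⁴) ≥ 1/8`.
-/

/-- The best-response edge relation in `L(2,(k₁,k₂))`: the sample point `ω`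
records, for each column, the winning row index, and for each row, the winning
column index; `u → v` iff `u ≠ v` lie in a common line and `v` is its winner. -/
def edge2 {k₁ k₂ : ℕ} (ω : (Fin k₂ → Fin k₁) × (Fin k₁ → Fin k₂))
    (u v : Fin k₁ × Fin k₂) : Prop :=
  u ≠ v ∧ ((u.2 = v.2 ∧ ω.1 u.2 = v.1) ∨ (u.1 = v.1 ∧ ω.2 u.1 = v.2))

open Finset Function

theorem Finset.two_mul_sum_card_le {ι α : Type*} [DecidableEq ι] [DecidableEq α]
    (P : Finset ι) (A : ι → Finset α) :
    2 * ∑ p ∈ P, #(A p) ≤ 2 * #(P.biUnion A) + ∑ pq ∈ P.offDiag, #(A pq.1 ∩ A pq.2) := by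
  set U := P.biUnion A
  set c : α → Finset ι := fun x => {p ∈ P | x ∈ A p}
  have hsum : ∑ p ∈ P, #(A p) = ∑ x ∈ U, #(c x) := by
    convert sum_card_bipartiteAbove_eq_sum_card_bipartiteBelow (s := P) (t := U)
      (r := fun p x => x ∈ A p) using 3 with p hp
    · ext x
      simpa [bipartiteAbove, U] using fun hx => ⟨p, hp, hx⟩
    · rfl
  have hpairs : ∑ pq ∈ P.offDiag, #(A pq.1 ∩ A pq.2) = ∑ x ∈ U, #(c x).offDiag := by
    convert sum_card_bipartiteAbove_eq_sum_card_bipartiteBelow (s := P.offDiag) (t := U)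
      (r := fun pq x => x ∈ A pq.1 ∩ A pq.2) using 3 with pq hpq x
    · ext x
      simpa [bipartiteAbove, U] using fun hx _ => ⟨pq.1, (mem_offDiag.mp hpq).1, hx⟩
    · ext pq
      simp only [bipartiteBelow, mem_filter, mem_offDiag, mem_inter, c]
      tauto
  rw [hsum, hpairs, mul_sum, mul_comm 2 #U, ← smul_eq_mul, ← sum_const, ← sum_add_distrib]
  -- pointwise: `2 c ≤ 2 + c (c - 1)` for every `c : ℕ`
  refine sum_le_sum fun x _ => ?_
  rw [offDiag_card]
  have := Nat.le_mul_self #(c x)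
  zify [this]
  nlinarith

theorem Finset.card_filter_univ_prod {α β : Type*} [Fintype α] [Fintype β] (p : α × β → Prop)
    [DecidablePred p] : #{ω | p ω} = ∑ a, #{b | p (a, b)} := by
  simp only [card_filter, Fintype.sum_prod_type]

section

variable {ι α β : Type*} [Fintype ι] [Fintype α] [DecidableEq α] [Fintype β] [DecidableEq β]

theorem card_filter_comp_eq_mul_pow {x : ι → α} (hx : Injective x) (y : ι → β) :
    #{f : α → β | ∀ i, f (x i) = y i} * Fintype.card β ^ Fintype.card ι =
      Fintype.card β ^ Fintype.card α := by
  set s : Finset α := univ.map ⟨x, hx⟩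
  set t : α → Finset β := fun a => {c | ∀ i, x i = a → c = y i}
  have hfiber : ({f : α → β | ∀ i, f (x i) = y i} : Finset _) = Fintype.piFinset t := by
    ext f
    simpa [t] using ⟨fun h a i hi => hi ▸ h i, fun h i => h _ i rfl⟩
  have hcard : ∀ a, #(t a) = Fintype.card β ^ (if a ∈ sᶜ then 1 else 0) := by
    intro a
    by_cases ha : a ∈ s
    · obtain ⟨i, -, rfl⟩ := mem_map.mp ha
      simp [t, s, hx.eq_iff, filter_eq']
    · simp_all [t, s]
  have hs : #s = Fintype.card ι := by simp [s]
  rw [hfiber, Fintype.card_piFinset, Finset.prod_congr rfl fun a _ => hcard a,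
    prod_pow_eq_pow_sum, sum_boole, filter_mem_eq_inter, univ_inter, card_compl, hs,
    Nat.cast_id, pow_sub_mul_pow _ (Fintype.card_le_of_injective x hx)]

theorem card_filter_comp_mul_pow_le {y : ι → β} (hy : Injective y) (x : ι → α) :
    #{f : α → β | ∀ i, f (x i) = y i} * Fintype.card β ^ Fintype.card ι ≤
      Fintype.card β ^ Fintype.card α := by
  by_cases h : ∃ f : α → β, ∀ i, f (x i) = y i
  · obtain ⟨f, hf⟩ := h
    have hx : Injective x := Injective.of_comp (f := f) (by rwa [show f ∘ x = y from funext hf])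
    exact (card_filter_comp_eq_mul_pow hx y).le
  · simp only [not_exists] at h
    simp [filter_false_of_mem fun f _ => h f]

theorem card_filter_apply_eq_apply_mul {a a' : α} (ha : a ≠ a') :
    #{f : α → β | f a = f a'} * Fintype.card β = Fintype.card β ^ Fintype.card α := by
  have hfiber (c : β) : #{f ∈ ({f : α → β | f a = f a'} : Finset _) | f a = c} *
      Fintype.card β ^ 2 = Fintype.card β ^ Fintype.card α := by
    have := card_filter_comp_eq_mul_pow (β := β) (x := ![a, a'])
      (by simp [Injective, Fin.forall_fin_two, ha, ha.symm]) ![c, c]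
    rw [Fintype.card_fin] at this
    rw [← this, filter_filter]
    congr 3
    ext f
    simp only [Fin.forall_fin_two, Matrix.cons_val_zero, Matrix.cons_val_one]
    constructor
    · rintro ⟨h, rfl⟩; exact ⟨rfl, h.symm⟩
    · rintro ⟨rfl, h⟩; exact ⟨h.symm, rfl⟩
  have h : #{f : α → β | f a = f a'} * Fintype.card β ^ 2 =
      Fintype.card β * Fintype.card β ^ Fintype.card α := by
    rw [card_eq_sum_card_fiberwise (f := fun f => f a) (t := univ) (fun _ _ => mem_univ _),
      sum_mul, sum_congr rfl fun c _ => hfiber c, sum_const, card_univ, smul_eq_mul]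
  rcases (Fintype.card β).eq_zero_or_pos with h0 | hpos
  · have : Nonempty α := ⟨a⟩
    simp [h0, zero_pow Fintype.card_ne_zero]
  · exact Nat.eq_of_mul_eq_mul_left hpos (by rw [← h]; ring)

end

theorem le_eight_mul_of_bonferroni {k n T σ ι u : ℝ} (hk : 2 ≤ k) (hn : 2 ≤ n) (hT : 0 ≤ T)
    (hσ : σ * (k * n ^ 2) = n * (n - 1) / 2 * ((k - 1) * T))
    (hι : ι * n ^ 4 ≤ n * (n - 1) / 2 * ((n - 2) * (n - 2 - 1) / 2) * T)
    (hbonf : 2 * σ ≤ 2 * u + ι) : T ≤ 8 * u := by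
  have hn0 : 0 < n := by linarith
  have hσ' : (n - 1) * T ≤ 4 * n * σ := by
    refine le_of_mul_le_mul_left ?_ (by positivity : 0 < k * n)
    nlinarith [mul_nonneg (mul_nonneg (mul_nonneg hn0.le (by linarith : 0 ≤ n - 1)) hT)
      (by linarith : 0 ≤ k - 2)]
  have hι' : 4 * n ^ 3 * ι ≤ (n - 1) * (n - 2) * (n - 3) * T := by
    refine le_of_mul_le_mul_left ?_ hn0
    nlinarith
  refine le_of_mul_le_mul_left ?_ (by positivity : 0 < n ^ 3)
  nlinarith [mul_le_mul_of_nonneg_left hbonf (by positivity : 0 ≤ n ^ 3),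
    mul_le_mul_of_nonneg_left hσ' (sq_nonneg n),
    mul_nonneg (mul_nonneg (by linarith : 0 ≤ 4 * n - 3) (by linarith : 0 ≤ n - 2)) hT]

abbrev Outcome (k₁ k₂ : ℕ) : Type := (Fin k₂ → Fin k₁) × (Fin k₁ → Fin k₂)

section

variable {k₁ k₂ : ℕ}

def HasDirectedCycle (ω : Outcome k₁ k₂) : Prop :=
  ∃ m : ℕ, ∃ _hm : 2 ≤ m, ∃ f : Fin m → Fin k₁ × Fin k₂,
    Injective f ∧ ∀ i : Fin m, edge2 ω (f i) (f (i + ⟨1, by omega⟩))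

def swapEvent (S : Finset (Fin k₂)) : Finset (Outcome k₁ k₂) :=
  {ω | ∀ b ∈ S, ω.2 (ω.1 b) ∈ S.erase b}

theorem mem_swapEvent_pair {b b' : Fin k₂} (hb : b ≠ b') {ω : Outcome k₁ k₂} :
    ω ∈ swapEvent {b, b'} ↔ ω.2 (ω.1 b) = b' ∧ ω.2 (ω.1 b') = b := by
  simp only [swapEvent, mem_filter, mem_univ, true_and, mem_erase, mem_insert, mem_singleton]
  grind

theorem hasDirectedCycle_of_mem_swapEvent_pair {b b' : Fin k₂} (hb : b ≠ b')
    {ω : Outcome k₁ k₂} (hω : ω ∈ swapEvent {b, b'}) :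
    HasDirectedCycle ω := by
  obtain ⟨e, e'⟩ := (mem_swapEvent_pair hb).mp hω
  have hr : ω.1 b ≠ ω.1 b' := fun h => hb (by rw [← e', ← h, e])
  refine ⟨4, by norm_num,
    ![(ω.1 b, b), (ω.1 b, b'), (ω.1 b', b'), (ω.1 b', b)], ?_, fun i => ?_⟩
  · simp [Injective, Fin.forall_fin_succ, hb, hr, hb.symm, hr.symm]
  · fin_cases i <;> simp [edge2, e, e', hb, hr, hb.symm, hr.symm]

theorem eq_of_mem_swapEvent_inter {S S' : Finset (Fin k₂)} (hS : #S = 2) (hS' : #S' = 2)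
    (hSS' : ¬Disjoint S S') {ω : Outcome k₁ k₂}
    (hω : ω ∈ swapEvent S) (hω' : ω ∈ swapEvent S') : S = S' := by
  obtain ⟨b, hbS, hbS'⟩ := not_disjoint_iff.mp hSS'
  have h := (mem_filter.mp hω).2 b hbS
  have h' := (mem_filter.mp hω').2 b hbS'
  rw [mem_erase] at h h'
  have hpair : #{b, ω.2 (ω.1 b)} = 2 := card_pair h.1.symm
  rw [← eq_of_subset_of_card_le (insert_subset hbS (singleton_subset_iff.mpr h.2))
      (hS.trans hpair.symm).le,
    ← eq_of_subset_of_card_le (insert_subset hbS' (singleton_subset_iff.mpr h'.2))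
      (hS'.trans hpair.symm).le]

theorem card_swapEvent_pair {b b' : Fin k₂} (hb : b ≠ b') :
    (#(swapEvent (k₁ := k₁) {b, b'}) : ℝ) * (k₁ * k₂ ^ 2) = (k₁ - 1) * (k₁ ^ k₂ * k₂ ^ k₁) := by
  have hfiber (r : Fin k₂ → Fin k₁) :
      #{s : Fin k₁ → Fin k₂ | s (r b) = b' ∧ s (r b') = b} * k₂ ^ 2 =
        if r b = r b' then 0 else k₂ ^ k₁ := by
    split_ifs with h
    · simpa [h] using .inl fun s h₁ h₂ => hb (h₂.symm.trans h₁)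
    · simpa [Fin.forall_fin_two] using card_filter_comp_eq_mul_pow (β := Fin k₂)
        (x := ![r b, r b']) (by simp [Injective, Fin.forall_fin_two, h, Ne.symm h]) ![b', b]
  have hA : swapEvent {b, b'} =
      ({ω : Outcome k₁ k₂ | ω.2 (ω.1 b) = b' ∧ ω.2 (ω.1 b') = b} : Finset _) := by
    ext
    simp [mem_swapEvent_pair hb]
  have hcols : #(swapEvent (k₁ := k₁) {b, b'}) * k₂ ^ 2 =
      #{r : Fin k₂ → Fin k₁ | r b ≠ r b'} * k₂ ^ k₁ := by
    rw [hA, card_filter_univ_prod, sum_mul, sum_congr rfl fun r _ => hfiber r, sum_ite,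
      sum_const_zero, zero_add, sum_const, smul_eq_mul]
  have hrows := card_filter_apply_eq_apply_mul (β := Fin k₁) hb
  have hsplit := card_filter_add_card_filter_not (s := (univ : Finset (Fin k₂ → Fin k₁)))
    (fun r => r b = r b')
  simp only [Fintype.card_fin, card_univ, Fintype.card_fun] at hrows hsplit
  rw [← Nat.cast_inj (R := ℝ)] at hcols hrows hsplit
  push_cast at hcols hrows hsplit
  linear_combination k₁ * hcols + k₁ * (k₂ ^ k₁ : ℝ) * hsplit - (k₂ ^ k₁ : ℝ) * hrows

theorem card_swapEvent_inter_mul_le {S S' : Finset (Fin k₂)} (hS : #S = 2) (hS' : #S' = 2)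
    (hSS' : Disjoint S S') :
    #(swapEvent (k₁ := k₁) S ∩ swapEvent S') * k₂ ^ 4 ≤ k₁ ^ k₂ * k₂ ^ k₁ := by
  obtain ⟨b, b', hb, rfl⟩ := card_eq_two.mp hS
  obtain ⟨d, d', hd, rfl⟩ := card_eq_two.mp hS'
  have hinj : Injective ![b', b, d', d] := by
    simp only [disjoint_insert_left, disjoint_insert_right, disjoint_singleton, mem_insert,
      mem_singleton, not_or] at hSS'
    obtain ⟨⟨hdb, hdb'⟩, hbd', hb'd'⟩ := hSS'
    simp [Injective, Fin.forall_fin_succ, hb, hd, hdb, hdb', hbd', hb'd', hb.symm, hd.symm,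
      Ne.symm hdb, Ne.symm hdb', Ne.symm hbd', hb'd'.symm]
  have hA : swapEvent {b, b'} ∩ swapEvent {d, d'} = ({ω : Outcome k₁ k₂ |
      ∀ i, ω.2 (![ω.1 b, ω.1 b', ω.1 d, ω.1 d'] i) = ![b', b, d', d] i} : Finset _) := by
    ext ω
    simp [mem_swapEvent_pair hb, mem_swapEvent_pair hd, Fin.forall_fin_succ, and_assoc]
  calc #(swapEvent (k₁ := k₁) {b, b'} ∩ swapEvent {d, d'}) * k₂ ^ 4
      = ∑ r : Fin k₂ → Fin k₁, #{s : Fin k₁ → Fin k₂ |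
          ∀ i, s (![r b, r b', r d, r d'] i) = ![b', b, d', d] i} * k₂ ^ 4 := by
        rw [hA, card_filter_univ_prod, sum_mul]
    _ ≤ ∑ _r : Fin k₂ → Fin k₁, k₂ ^ k₁ := by
        gcongr with r
        simpa using card_filter_comp_mul_pow_le (β := Fin k₂) hinj ![r b, r b', r d, r d']
    _ = k₁ ^ k₂ * k₂ ^ k₁ := by simp

theorem sum_card_swapEvent :
    (∑ S ∈ powersetCard 2 (univ : Finset (Fin k₂)), (#(swapEvent (k₁ := k₁) S) : ℝ)) *
      (k₁ * k₂ ^ 2) = k₂.choose 2 * ((k₁ - 1) * (k₁ ^ k₂ * k₂ ^ k₁)) := by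
  rw [sum_mul, sum_congr rfl fun S hS => ?_, sum_const, card_powersetCard, card_univ,
    Fintype.card_fin, nsmul_eq_mul]
  obtain ⟨b, b', hb, rfl⟩ := card_eq_two.mp (mem_powersetCard.mp hS).2
  exact card_swapEvent_pair hb

theorem sum_card_swapEvent_inter_le :
    (∑ SS' ∈ (powersetCard 2 (univ : Finset (Fin k₂))).offDiag,
      #(swapEvent (k₁ := k₁) SS'.1 ∩ swapEvent SS'.2)) * k₂ ^ 4 ≤
        k₂.choose 2 * (k₂ - 2).choose 2 * (k₁ ^ k₂ * k₂ ^ k₁) := by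
  set P := powersetCard 2 (univ : Finset (Fin k₂))
  have hdisj (S) (hS : S ∈ P) : {S' ∈ P | Disjoint S S'} = powersetCard 2 Sᶜ := by
    ext S'
    simp [P, mem_powersetCard, subset_compl_iff_disjoint_left, and_comm]
  calc _ ≤ ∑ SS' ∈ P ×ˢ P, if Disjoint SS'.1 SS'.2 then k₁ ^ k₂ * k₂ ^ k₁ else 0 := by
        rw [sum_mul]
        refine (sum_le_sum fun SS' hSS' => ?_).trans
          (sum_le_sum_of_subset (product_sdiff_diag (s := P) ▸ sdiff_subset))
        obtain ⟨hS, hS', hne⟩ := mem_offDiag.mp hSS'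
        have hS2 := (mem_powersetCard.mp hS).2
        have hS2' := (mem_powersetCard.mp hS').2
        split_ifs with h
        · exact card_swapEvent_inter_mul_le hS2 hS2' h
        · rw [card_eq_zero.mpr (eq_empty_of_forall_notMem fun ω hω =>
            hne (eq_of_mem_swapEvent_inter hS2 hS2' h (mem_inter.mp hω).1 (mem_inter.mp hω).2)),
            zero_mul]
    _ = ∑ S ∈ P, #{S' ∈ P | Disjoint S S'} * (k₁ ^ k₂ * k₂ ^ k₁) := by
        rw [sum_product]
        simp only [sum_ite, sum_const_zero, add_zero, sum_const, smul_eq_mul]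
    _ = _ := by
        rw [sum_congr rfl fun S hS => by rw [hdisj S hS, card_powersetCard, card_compl,
          (mem_powersetCard.mp hS).2, Fintype.card_fin], sum_const, card_powersetCard, card_univ,
          Fintype.card_fin, smul_eq_mul, mul_assoc]

theorem card_le_eight_mul_card_biUnion_swapEvent (h₁ : 2 ≤ k₁) (h₂ : 2 ≤ k₂) :
    k₁ ^ k₂ * k₂ ^ k₁ ≤
      8 * #((powersetCard 2 (univ : Finset (Fin k₂))).biUnion (swapEvent (k₁ := k₁))) := by
  set P := powersetCard 2 (univ : Finset (Fin k₂))
  have hinter := sum_card_swapEvent_inter_le (k₁ := k₁) (k₂ := k₂)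
  have hbonf := P.two_mul_sum_card_le (swapEvent (k₁ := k₁))
  rw [← Nat.cast_le (α := ℝ)] at hinter hbonf ⊢
  push_cast [Nat.cast_choose_two, Nat.cast_sub h₂] at hinter hbonf ⊢
  refine le_eight_mul_of_bonferroni (k := k₁) (n := k₂) (by exact_mod_cast h₁)
    (by exact_mod_cast h₂) (by positivity) ?_ hinter hbonf
  rw [sum_card_swapEvent, Nat.cast_choose_two]

end

/-- For `k₁, k₂ ≥ 2`, the random graph `L(2,(k₁,k₂))` (each row and column
independently choosing a uniform winner) contains a directed cycle with
probability at least `1/8`. -/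
theorem stmt14 (k₁ k₂ : ℕ) (h₁ : 2 ≤ k₁) (h₂ : 2 ≤ k₂) :
    (1 : ℝ) / 8 ≤
      (({ω : (Fin k₂ → Fin k₁) × (Fin k₁ → Fin k₂) |
          ∃ m : ℕ, ∃ _hm : 2 ≤ m, ∃ f : Fin m → Fin k₁ × Fin k₂,
            Function.Injective f ∧ ∀ i : Fin m, edge2 ω (f i) (f (i + ⟨1, by omega⟩))}.ncard : ℝ)) /
        (Fintype.card ((Fin k₂ → Fin k₁) × (Fin k₁ → Fin k₂))) := by
  have hcycles : (((powersetCard 2 univ).biUnion swapEvent : Finset (Outcome k₁ k₂)) :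
      Set (Outcome k₁ k₂)) ⊆ {ω | HasDirectedCycle ω} := by
    intro ω hω
    obtain ⟨S, hS, hωS⟩ := mem_biUnion.mp hω
    obtain ⟨b, b', hb, rfl⟩ := card_eq_two.mp (mem_powersetCard.mp hS).2
    exact hasDirectedCycle_of_mem_swapEvent_pair hb hωS
  have hcount := (card_le_eight_mul_card_biUnion_swapEvent h₁ h₂).trans
    (Nat.mul_le_mul_left 8 ((Set.ncard_coe_finset _).symm.le.trans (Set.ncard_le_ncard hcycles)))
  show (1 : ℝ) / 8 ≤ ({ω | HasDirectedCycle ω}.ncard : ℝ) / _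
  simp only [Fintype.card_prod, Fintype.card_fun, Fintype.card_fin]
  rw [le_div_iff₀ (by positivity), one_div_mul_eq_div, div_le_iff₀ (by norm_num)]
  exact_mod_cast hcount.trans_eq (mul_comm 8 _)
end

section
/- Let $n \geq 4$ and $\mathbf{k} \in \{2,3,\dots\}^n$. In the random graph $\vec{L}(n,\mathbf{k})$, the probability that a fixed 4-cycle in a fixed $\{1,2\}$-plane is sticky (each of its four vertices can only reach the other vertices of the 4-cycle) is at least $\prod_{i=1}^n k_i^{-4}$; moreover, there is a vertex whose lines are disjoint from the 4-cycle, so the event that this vertex is a sink (probability $\prod_{i=1}^n k_i^{-1}$) is independent of the sticky-4-cycle event, and hence with probability at least $\prod_{i=1}^n k_i^{-5}$ the graph contains both a sink and a sticky 4-cycle (and is therefore not weakly acyclic). -/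
/-- Vertices of the Hamming graph `H(n,k)`: action profiles. -/
abbrev GVert (n : ℕ) (k : Fin n → ℕ) := ∀ i : Fin n, Fin (k i)

/-- Sample space of `L(n,k)`: for each coordinate `i` and each line in
coordinate `i` (encoded by the values on the remaining coordinates), a winner
(its `i`-th coordinate); chosen uniformly. -/
abbrev LSpace (n : ℕ) (k : Fin n → ℕ) :=
  ∀ i : Fin n, ((∀ j : {j : Fin n // j ≠ i}, Fin (k j.1)) → Fin (k i))

/-- The best-response edge relation of `L(n,k)`: `u → v` iff `u ≠ v` lie on a
common line and `v` is the winner of that line. -/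
def BREdge {n : ℕ} {k : Fin n → ℕ} (ω : LSpace n k) (u v : GVert n k) : Prop :=
  u ≠ v ∧ ∃ i : Fin n, (∀ j, j ≠ i → u j = v j) ∧ ω i (fun j => v j.1) = v i

/-- `v` is a sink of `L(n,k)` under the outcome `ω`. -/
def IsSink {n : ℕ} {k : Fin n → ℕ} (ω : LSpace n k) (v : GVert n k) : Prop :=
  ∀ u, ¬ BREdge ω v u


abbrev HLine (n : ℕ) (k : Fin n → ℕ) (i : Fin n) := ∀ j : {j : Fin n // j ≠ i}, Fin (k j.1)

/-- The line through `u` in coordinate `i`. -/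
def hproj {n : ℕ} {k : Fin n → ℕ} (i : Fin n) (u : GVert n k) : HLine n k i :=
  fun j => u j.1

lemma hproj_eq_iff {n : ℕ} {k : Fin n → ℕ} (i : Fin n) (u v : GVert n k) :
    hproj i u = hproj i v ↔ ∀ j, j ≠ i → u j = v j := by
  constructor
  · intro h j hj
    exact congrFun h ⟨j, hj⟩
  · intro h
    funext j
    exact h j.1 j.2

lemma edge_iff {n : ℕ} {k : Fin n → ℕ} (ω : LSpace n k) (u v : GVert n k) :
    BREdge ω u v ↔ u ≠ v ∧ ∃ i, v = Function.update u i (ω i (hproj i u)) := by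
  constructor
  · rintro ⟨hne, i, hagree, hwin⟩
    have hp : hproj i v = hproj i u := (hproj_eq_iff i v u).2 fun j hj => (hagree j hj).symm
    refine ⟨hne, i, ?_⟩
    funext j
    by_cases hj : j = i
    · subst hj
      rw [Function.update_self, ← hp]
      exact hwin.symm
    · rw [Function.update_of_ne hj, hagree j hj]
  · rintro ⟨hne, i, hv⟩
    refine ⟨hne, i, fun j hj => by rw [hv, Function.update_of_ne hj], ?_⟩
    have hp : hproj i v = hproj i u := by
      funext j
      show v j.1 = u j.1
      rw [hv, Function.update_of_ne j.2]
    show ω i (hproj i v) = v i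
    rw [hp, hv, Function.update_self]

lemma sink_iff {n : ℕ} {k : Fin n → ℕ} (ω : LSpace n k) (z : GVert n k) :
    IsSink ω z ↔ ∀ i, ω i (hproj i z) = z i := by
  constructor
  · intro hs i
    by_contra hne
    have hzu : z ≠ Function.update z i (ω i (hproj i z)) := by
      intro h
      apply hne
      have h2 := congrFun h i
      rw [Function.update_self] at h2
      exact h2.symm
    exact hs _ ((edge_iff ω z _).2 ⟨hzu, i, rfl⟩)
  · intro h u hedge
    rcases (edge_iff ω z u).1 hedge with ⟨hne, i, hu⟩
    exact hne (by rw [hu, h i, Function.update_eq_self])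

lemma cyl_card {ι : Type*} [Fintype ι] [DecidableEq ι] {α : ι → Type*} [∀ i, Fintype (α i)]
    [∀ i, DecidableEq (α i)] (s : Finset ι) (f : ∀ i, α i) :
    Nat.card {g : ∀ i, α i // ∀ i ∈ s, g i = f i} * ∏ i ∈ s, Fintype.card (α i) =
      Fintype.card (∀ i, α i) := by
  have e : {g : ∀ i, α i // ∀ i ∈ s, g i = f i} ≃ ∀ i : {i // i ∉ s}, α i.1 :=
    { toFun := fun g i => g.1 i.1
      invFun := fun h => ⟨fun i => if hi : i ∈ s then f i else h ⟨i, hi⟩,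
        fun i hi => dif_pos hi⟩
      left_inv := by
        rintro ⟨g, hg⟩
        ext i
        by_cases hi : i ∈ s
        · simp [dif_pos hi, hg i hi]
        · simp [dif_neg hi]
      right_inv := by
        intro h
        ext i
        simp [dif_neg i.2] }
  have hp := Finset.prod_subtype (p := fun i => i ∉ s) (F := Subtype.fintype _) sᶜ
      (fun x => Finset.mem_compl) (fun i => Fintype.card (α i))
  rw [Nat.card_congr e, Nat.card_eq_fintype_card, Fintype.card_pi, Fintype.card_pi, ← hp,
    Finset.prod_compl_mul_prod s (fun i => Fintype.card (α i))]

lemma line_cyl {n : ℕ} {k : Fin n → ℕ} (T : ∀ i, Finset (HLine n k i))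
    (F : ∀ i, HLine n k i → Fin (k i)) :
    Nat.card {ω : LSpace n k // ∀ i, ∀ ℓ ∈ T i, ω i ℓ = F i ℓ} *
      ∏ i, (k i) ^ (T i).card = Fintype.card (LSpace n k) := by
  classical
  have key := cyl_card (ι := Σ i : Fin n, HLine n k i) (α := fun c => Fin (k c.1))
    (Finset.univ.sigma T) (fun c => F c.1 c.2)
  have e : {g : ∀ c : Σ i, HLine n k i, Fin (k c.1) //
      ∀ c ∈ Finset.univ.sigma T, g c = F c.1 c.2} ≃
      {ω : LSpace n k // ∀ i, ∀ ℓ ∈ T i, ω i ℓ = F i ℓ} := by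
    refine (Equiv.piCurry fun (i : Fin n) (_ : HLine n k i) => Fin (k i)).subtypeEquiv ?_
    intro g
    constructor
    · intro h i ℓ hℓ
      exact h ⟨i, ℓ⟩ (Finset.mem_sigma.2 ⟨Finset.mem_univ i, hℓ⟩)
    · rintro h ⟨i, ℓ⟩ hc
      exact h i ℓ (Finset.mem_sigma.1 hc).2
  rw [Nat.card_congr e] at key
  have hc : Fintype.card ((x : Σ i : Fin n, HLine n k i) → Fin (k x.1)) =
      Fintype.card (LSpace n k) :=
    Fintype.card_congr (Equiv.piCurry fun (i : Fin n) (_ : HLine n k i) => Fin (k i))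
  rw [hc] at key
  rw [← key]
  congr 1
  rw [Finset.prod_sigma]
  refine Finset.prod_congr rfl fun i _ => ?_
  rw [Finset.prod_congr rfl fun ℓ _ => Fintype.card_fin (k i), Finset.prod_const]

/-- For `n ≥ 4`: fixing a 4-cycle in a `{1,2}`-plane (the four vertices agreeing
with `w` off the first two coordinates, with first coordinate `x` or `y` and
second coordinate `a` or `b`), the probability that it is a sticky 4-cycle (a
directed 4-cycle each of whose vertices can only reach vertices of the 4-cycle)
is at least `∏ᵢ kᵢ⁻⁴`; there is a vertex `z` whose lines are disjoint from the
4-cycle; for any such `z` the sink event at `z` (of probability `∏ᵢ kᵢ⁻¹`) is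
independent of the sticky event; hence with probability at least `∏ᵢ kᵢ⁻⁵` the
graph contains both a sink and a sticky 4-cycle, and any such outcome is not
weakly acyclic. -/
theorem stmt17 (n : ℕ) (hn : 4 ≤ n) (k : Fin n → ℕ) (hk : ∀ i, 2 ≤ k i)
    (w : GVert n k) (c₀ c₁ : Fin n) (hc₀ : (c₀ : ℕ) = 0) (hc₁ : (c₁ : ℕ) = 1)
    (x y : Fin (k c₀)) (hxy : x ≠ y) (a b : Fin (k c₁)) (hab : a ≠ b) :
    let p00 : GVert n k := Function.update (Function.update w c₀ x) c₁ a
    let p01 : GVert n k := Function.update (Function.update w c₀ x) c₁ b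
    let p11 : GVert n k := Function.update (Function.update w c₀ y) c₁ b
    let p10 : GVert n k := Function.update (Function.update w c₀ y) c₁ a
    let C : Set (GVert n k) := {p00, p01, p11, p10}
    let Sticky : LSpace n k → Prop := fun ω =>
      BREdge ω p00 p01 ∧ BREdge ω p01 p11 ∧ BREdge ω p11 p10 ∧ BREdge ω p10 p00 ∧
        ∀ u ∈ C, ∀ z, Relation.ReflTransGen (BREdge ω) u z → z ∈ C
    (∏ i, ((k i : ℝ) ^ (4 : ℕ))⁻¹ ≤
        ({ω : LSpace n k | Sticky ω}.ncard : ℝ) / (Fintype.card (LSpace n k))) ∧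
    (∃ z : GVert n k, ∀ (i : Fin n) (t : Fin (k i)), Function.update z i t ∉ C) ∧
    (∀ z : GVert n k, (∀ (i : Fin n) (t : Fin (k i)), Function.update z i t ∉ C) →
      ({ω : LSpace n k | IsSink ω z}.ncard : ℝ) / (Fintype.card (LSpace n k)) =
          ∏ i, ((k i : ℝ))⁻¹ ∧
        {ω : LSpace n k | IsSink ω z ∧ Sticky ω}.ncard * Fintype.card (LSpace n k) =
          {ω : LSpace n k | IsSink ω z}.ncard * {ω : LSpace n k | Sticky ω}.ncard) ∧
    (∏ i, ((k i : ℝ) ^ (5 : ℕ))⁻¹ ≤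
        ({ω : LSpace n k | (∃ s, IsSink ω s) ∧ Sticky ω}.ncard : ℝ) /
          (Fintype.card (LSpace n k))) ∧
    (∀ ω : LSpace n k, (∃ s, IsSink ω s) → Sticky ω →
      ¬ (∀ v : GVert n k, ∃ s, IsSink ω s ∧ Relation.ReflTransGen (BREdge ω) v s)) := by
  classical
  intro p00 p01 p11 p10 C Sticky
  -- basic coordinate facts
  have hc01 : c₀ ≠ c₁ := fun h => by rw [h] at hc₀; rw [hc₀] at hc₁; exact one_ne_zero hc₁.symm
  have hval : ∀ (s : Fin (k c₀)) (t : Fin (k c₁)),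
      (Function.update (Function.update w c₀ s) c₁ t) c₀ = s ∧
      (Function.update (Function.update w c₀ s) c₁ t) c₁ = t ∧
      (∀ j, j ≠ c₀ → j ≠ c₁ → Function.update (Function.update w c₀ s) c₁ t j = w j) := by
    intro s t
    refine ⟨?_, Function.update_self _ _ _, ?_⟩
    · rw [Function.update_of_ne hc01, Function.update_self]
    · intro j hj0 hj1
      rw [Function.update_of_ne hj1, Function.update_of_ne hj0]
  -- values
  have v0 := hval x a  -- p00
  have v1 := hval x b  -- p01
  have v2 := hval y b  -- p11
  have v3 := hval y a  -- p10
  -- agreements along cycle edges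
  have ag01 : ∀ j, j ≠ c₁ → p00 j = p01 j := by
    intro j hj
    by_cases h0 : j = c₀
    · subst h0; exact v0.1.trans v1.1.symm
    · exact (v0.2.2 j h0 hj).trans (v1.2.2 j h0 hj).symm
  have ag12 : ∀ j, j ≠ c₀ → p01 j = p11 j := by
    intro j hj
    by_cases h1 : j = c₁
    · subst h1; exact v1.2.1.trans v2.2.1.symm
    · exact (v1.2.2 j hj h1).trans (v2.2.2 j hj h1).symm
  have ag23 : ∀ j, j ≠ c₁ → p11 j = p10 j := by
    intro j hj
    by_cases h0 : j = c₀
    · subst h0; exact v2.1.trans v3.1.symm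
    · exact (v2.2.2 j h0 hj).trans (v3.2.2 j h0 hj).symm
  have ag30 : ∀ j, j ≠ c₀ → p10 j = p00 j := by
    intro j hj
    by_cases h1 : j = c₁
    · subst h1; exact v3.2.1.trans v0.2.1.symm
    · exact (v3.2.2 j hj h1).trans (v0.2.2 j hj h1).symm
  -- distinctness
  have ne01 : p00 ≠ p01 := fun h => hab (v0.2.1.symm.trans ((congrFun h c₁).trans v1.2.1))
  have ne12 : p01 ≠ p11 := fun h => hxy (v1.1.symm.trans ((congrFun h c₀).trans v2.1))
  have ne23 : p11 ≠ p10 := fun h => hab ((v2.2.1.symm.trans ((congrFun h c₁).trans v3.2.1)).symm)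
  have ne30 : p10 ≠ p00 := fun h => hxy ((v3.1.symm.trans ((congrFun h c₀).trans v0.1)).symm)
  have upd01 : Function.update p00 c₁ (p01 c₁) = p01 := by
    funext j
    by_cases hj : j = c₁
    · rw [hj, Function.update_self]
    · rw [Function.update_of_ne hj]; exact ag01 j hj
  have upd12 : Function.update p01 c₀ (p11 c₀) = p11 := by
    funext j
    by_cases hj : j = c₀
    · rw [hj, Function.update_self]
    · rw [Function.update_of_ne hj]; exact ag12 j hj
  have upd23 : Function.update p11 c₁ (p10 c₁) = p10 := by
    funext j
    by_cases hj : j = c₁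
    · rw [hj, Function.update_self]
    · rw [Function.update_of_ne hj]; exact ag23 j hj
  have upd30 : Function.update p10 c₀ (p00 c₀) = p00 := by
    funext j
    by_cases hj : j = c₀
    · rw [hj, Function.update_self]
    · rw [Function.update_of_ne hj]; exact ag30 j hj
  -- C membership
  have hCmem : ∀ v : GVert n k, v ∈ C ↔ (v = p00 ∨ v = p01 ∨ v = p11 ∨ v = p10) := by
    intro v; simp [C, Set.mem_insert_iff]
  have hCval : ∀ v ∈ C, ∀ j, j ≠ c₀ → j ≠ c₁ → v j = w j := by
    intro v hv j hj0 hj1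
    rcases (hCmem v).1 hv with h | h | h | h <;> subst h
    · exact v0.2.2 j hj0 hj1
    · exact v1.2.2 j hj0 hj1
    · exact v2.2.2 j hj0 hj1
    · exact v3.2.2 j hj0 hj1
  -- sticky characterization
  have m0 : p00 ∈ C := Or.inl rfl
  have m1 : p01 ∈ C := Or.inr (Or.inl rfl)
  have m2 : p11 ∈ C := Or.inr (Or.inr (Or.inl rfl))
  have m3 : p10 ∈ C := Or.inr (Or.inr (Or.inr rfl))
  -- projection equalities along the cycle
  have hpr01 : hproj c₁ p00 = hproj c₁ (k := k) p01 := (hproj_eq_iff _ _ _).2 ag01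
  have hpr12 : hproj c₀ p01 = hproj c₀ (k := k) p11 := (hproj_eq_iff _ _ _).2 ag12
  have hpr23 : hproj c₁ p11 = hproj c₁ (k := k) p10 := (hproj_eq_iff _ _ _).2 ag23
  have hpr30 : hproj c₀ p10 = hproj c₀ (k := k) p00 := (hproj_eq_iff _ _ _).2 ag30
  -- when projections of distinct cycle vertices coincide
  have hq01 : ∀ i, hproj i p01 = hproj i (k := k) p00 → i = c₁ := by
    intro i h
    by_contra hi
    have h2 := (hproj_eq_iff i p01 p00).1 h c₁ (fun e => hi e.symm)
    exact hab (v0.2.1.symm.trans (h2.symm.trans v1.2.1))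
  have hq1101 : ∀ i, hproj i p11 = hproj i (k := k) p01 → i = c₀ := by
    intro i h
    by_contra hi
    have h2 := (hproj_eq_iff i p11 p01).1 h c₀ (fun e => hi e.symm)
    exact hxy (v1.1.symm.trans (h2.symm.trans v2.1))
  have hq1011 : ∀ i, hproj i p10 = hproj i (k := k) p11 → i = c₁ := by
    intro i h
    by_contra hi
    have h2 := (hproj_eq_iff i p10 p11).1 h c₁ (fun e => hi e.symm)
    exact hab (v2.2.1.symm.trans (h2.symm.trans v3.2.1)).symm
  have hq1000 : ∀ i, hproj i p10 = hproj i (k := k) p00 → i = c₀ := by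
    intro i h
    by_contra hi
    have h2 := (hproj_eq_iff i p10 p00).1 h c₀ (fun e => hi e.symm)
    exact hxy (v0.1.symm.trans (h2.symm.trans v3.1))
  have hq1100 : ∀ i, hproj i p11 ≠ hproj i (k := k) p00 := by
    intro i h
    have hag := (hproj_eq_iff i p11 p00).1 h
    have hi0 : c₀ = i := by
      by_contra hi0
      exact hxy (v0.1.symm.trans ((hag c₀ hi0).symm.trans v2.1))
    have hi1 : c₁ = i := by
      by_contra hi1
      exact hab (v0.2.1.symm.trans ((hag c₁ hi1).symm.trans v2.2.1))
    exact hc01 (hi0.trans hi1.symm)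
  have hq1001 : ∀ i, hproj i p10 ≠ hproj i (k := k) p01 := by
    intro i h
    have hag := (hproj_eq_iff i p10 p01).1 h
    have hi0 : c₀ = i := by
      by_contra hi0
      exact hxy (v1.1.symm.trans ((hag c₀ hi0).symm.trans v3.1))
    have hi1 : c₁ = i := by
      by_contra hi1
      exact hab (v3.2.1.symm.trans ((hag c₁ hi1).trans v1.2.1))
    exact hc01 (hi0.trans hi1.symm)
  -- forcing of winners from edges
  have edge_forced : ∀ (ω : LSpace n k) (u v : GVert n k) (d : Fin n),
      BREdge ω u v → u d ≠ v d → ω d (hproj d u) = v d := by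
    rintro ω u v d ⟨hne, i, hag, hwin⟩ hd
    have hdi : d = i := by
      by_contra hdi
      exact hd (hag d hdi)
    subst hdi
    have hp : hproj d v = hproj d u := (hproj_eq_iff _ _ _).2 fun j hj => (hag j hj).symm
    have hwin' : ω d (hproj d v) = v d := hwin
    rw [hp] at hwin'
    exact hwin'
  have hStickyIff : ∀ ω : LSpace n k, Sticky ω ↔ ∀ i,
      ω i (hproj i p00) = p01 i ∧ ω i (hproj i p01) = p11 i ∧
      ω i (hproj i p11) = p10 i ∧ ω i (hproj i p10) = p00 i := by
    intro ω
    constructor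
    · rintro ⟨e1, e2, e3, e4, hcl⟩ i
      have q1 : ω c₁ (hproj c₁ p00) = p01 c₁ :=
        edge_forced ω p00 p01 c₁ e1 (fun h => hab (v0.2.1.symm.trans (h.trans v1.2.1)))
      have q2 : ω c₀ (hproj c₀ p01) = p11 c₀ :=
        edge_forced ω p01 p11 c₀ e2 (fun h => hxy (v1.1.symm.trans (h.trans v2.1)))
      have q3 : ω c₁ (hproj c₁ p11) = p10 c₁ :=
        edge_forced ω p11 p10 c₁ e3 (fun h => hab (v2.2.1.symm.trans (h.trans v3.2.1)).symm)
      have q4 : ω c₀ (hproj c₀ p10) = p00 c₀ :=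
        edge_forced ω p10 p00 c₀ e4 (fun h => hxy (v3.1.symm.trans (h.trans v0.1)).symm)
      by_cases hi0 : i = c₀
      · subst hi0
        refine ⟨?_, q2, ?_, q4⟩
        · rw [← hpr30]
          exact q4.trans (v0.1.trans v1.1.symm)
        · rw [← hpr12]
          exact q2.trans (v2.1.trans v3.1.symm)
      · by_cases hi1 : i = c₁
        · subst hi1
          refine ⟨q1, ?_, q3, ?_⟩
          · rw [← hpr01]
            exact q1.trans (v1.2.1.trans v2.2.1.symm)
          · rw [← hpr23]
            exact q3.trans (v3.2.1.trans v0.2.1.symm)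
        · have hoff : ∀ u, u ∈ C → ω i (hproj i u) = u i := by
            intro u hu
            by_contra hne
            have hedge : BREdge ω u (Function.update u i (ω i (hproj i u))) := by
              refine (edge_iff ω u _).2 ⟨?_, i, rfl⟩
              intro h
              have h2 := congrFun h i
              rw [Function.update_self] at h2
              exact hne h2.symm
            have hmem := hcl u hu _ (Relation.ReflTransGen.single hedge)
            have h1 : (Function.update u i (ω i (hproj i u))) i = w i :=
              hCval _ hmem i hi0 hi1
            rw [Function.update_self] at h1
            exact hne (h1.trans (hCval u hu i hi0 hi1).symm)
          have m0 : p00 ∈ C := (hCmem p00).2 (Or.inl rfl)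
          have m1 : p01 ∈ C := (hCmem p01).2 (Or.inr (Or.inl rfl))
          have m2 : p11 ∈ C := (hCmem p11).2 (Or.inr (Or.inr (Or.inl rfl)))
          have m3 : p10 ∈ C := (hCmem p10).2 (Or.inr (Or.inr (Or.inr rfl)))
          exact ⟨(hoff p00 m0).trans ((v0.2.2 i hi0 hi1).trans (v1.2.2 i hi0 hi1).symm),
            (hoff p01 m1).trans ((v1.2.2 i hi0 hi1).trans (v2.2.2 i hi0 hi1).symm),
            (hoff p11 m2).trans ((v2.2.2 i hi0 hi1).trans (v3.2.2 i hi0 hi1).symm),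
            (hoff p10 m3).trans ((v3.2.2 i hi0 hi1).trans (v0.2.2 i hi0 hi1).symm)⟩
    · intro h
      have e1 : BREdge ω p00 p01 := by
        refine ⟨ne01, c₁, ag01, ?_⟩
        show ω c₁ (hproj c₁ p01) = p01 c₁
        rw [← hpr01]
        exact (h c₁).1
      have e2 : BREdge ω p01 p11 := by
        refine ⟨ne12, c₀, ag12, ?_⟩
        show ω c₀ (hproj c₀ p11) = p11 c₀
        rw [← hpr12]
        exact (h c₀).2.1
      have e3 : BREdge ω p11 p10 := by
        refine ⟨ne23, c₁, ag23, ?_⟩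
        show ω c₁ (hproj c₁ p10) = p10 c₁
        rw [← hpr23]
        exact (h c₁).2.2.1
      have e4 : BREdge ω p10 p00 := by
        refine ⟨ne30, c₀, ag30, ?_⟩
        show ω c₀ (hproj c₀ p00) = p00 c₀
        rw [← hpr30]
        exact (h c₀).2.2.2
      have step : ∀ u ∈ C, ∀ v, BREdge ω u v → v ∈ C := by
        intro u hu v hedge
        rcases (edge_iff ω u v).1 hedge with ⟨hne, i, hv⟩
        rcases (hCmem u).1 hu with h' | h' | h' | h' <;> subst h'
        · rw [(h i).1] at hv
          by_cases hi : i = c₁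
          · rw [hi, upd01] at hv
            exact (hCmem v).2 (Or.inr (Or.inl hv))
          · have hvv : v = p00 := by
              rw [hv, ← ag01 i hi, Function.update_eq_self]
            exact (hCmem v).2 (Or.inl hvv)
        · rw [(h i).2.1] at hv
          by_cases hi : i = c₀
          · rw [hi, upd12] at hv
            exact (hCmem v).2 (Or.inr (Or.inr (Or.inl hv)))
          · have hvv : v = p01 := by
              rw [hv, ← ag12 i hi, Function.update_eq_self]
            exact (hCmem v).2 (Or.inr (Or.inl hvv))
        · rw [(h i).2.2.1] at hv
          by_cases hi : i = c₁
          · rw [hi, upd23] at hv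
            exact (hCmem v).2 (Or.inr (Or.inr (Or.inr hv)))
          · have hvv : v = p11 := by
              rw [hv, ← ag23 i hi, Function.update_eq_self]
            exact (hCmem v).2 (Or.inr (Or.inr (Or.inl hvv)))
        · rw [(h i).2.2.2] at hv
          by_cases hi : i = c₀
          · rw [hi, upd30] at hv
            exact (hCmem v).2 (Or.inl hv)
          · have hvv : v = p10 := by
              rw [hv, ← ag30 i hi, Function.update_eq_self]
            exact (hCmem v).2 (Or.inr (Or.inr (Or.inr hvv)))
      refine ⟨e1, e2, e3, e4, ?_⟩
      intro u hu z hz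
      induction hz with
      | refl => exact hu
      | tail _ hstep ih => exact step _ ih _ hstep
  -- the constraint data
  set T : ∀ i : Fin n, Finset (HLine n k i) :=
    fun i => {hproj i p00, hproj i p01, hproj i p11, hproj i p10} with hT
  set F : ∀ i : Fin n, HLine n k i → Fin (k i) := fun i ℓ =>
    if ℓ = hproj i p00 then p01 i else if ℓ = hproj i p01 then p11 i
      else if ℓ = hproj i p11 then p10 i else p00 i with hF
  have hFeval : ∀ i, F i (hproj i p00) = p01 i ∧ F i (hproj i p01) = p11 i ∧
      F i (hproj i p11) = p10 i ∧ F i (hproj i p10) = p00 i := by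
    intro i
    refine ⟨?_, ?_, ?_, ?_⟩
    · simp only [hF]
      rw [if_true]
    · simp only [hF]
      by_cases h1 : hproj i p01 = hproj i (k := k) p00
      · rw [if_pos h1]
        have hi := hq01 i h1
        rw [hi]
        exact v1.2.1.trans v2.2.1.symm
      · rw [if_neg h1]
        rw [if_true]
    · simp only [hF]
      rw [if_neg (hq1100 i)]
      by_cases h1 : hproj i p11 = hproj i (k := k) p01
      · rw [if_pos h1]
        have hi := hq1101 i h1
        rw [hi]
        exact v2.1.trans v3.1.symm
      · rw [if_neg h1]
        rw [if_true]
    · simp only [hF]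
      by_cases h1 : hproj i p10 = hproj i (k := k) p00
      · rw [if_pos h1]
        have hi := hq1000 i h1
        rw [hi]
        exact v1.1.trans v0.1.symm
      · rw [if_neg h1, if_neg (hq1001 i)]
        by_cases h2 : hproj i p10 = hproj i (k := k) p11
        · rw [if_pos h2]
          have hi := hq1011 i h2
          rw [hi]
          exact v3.2.1.trans v0.2.1.symm
        · rw [if_neg h2]
  have hStickyCyl : ∀ ω : LSpace n k, Sticky ω ↔ ∀ i, ∀ ℓ ∈ T i, ω i ℓ = F i ℓ := by
    intro ω
    rw [hStickyIff ω]
    constructor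
    · intro h i ℓ hℓ
      rcases h i with ⟨h1, h2, h3, h4⟩
      simp only [hT, Finset.mem_insert, Finset.mem_singleton] at hℓ
      rcases hℓ with h | h | h | h <;> subst h
      · rw [h1, (hFeval i).1]
      · rw [h2, (hFeval i).2.1]
      · rw [h3, (hFeval i).2.2.1]
      · rw [h4, (hFeval i).2.2.2]
    · intro h i
      have m : ∀ u : GVert n k, hproj i u ∈ T i →
          ω i (hproj i u) = F i (hproj i u) := fun u hu => h i _ hu
      refine ⟨?_, ?_, ?_, ?_⟩
      · rw [m p00 (by simp [hT]), (hFeval i).1]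
      · rw [m p01 (by simp [hT]), (hFeval i).2.1]
      · rw [m p11 (by simp [hT]), (hFeval i).2.2.1]
      · rw [m p10 (by simp [hT]), (hFeval i).2.2.2]
  -- counting infrastructure
  have hkpos : ∀ i, 0 < k i := fun i => lt_of_lt_of_le two_pos (hk i)
  have hNpos : 0 < Fintype.card (LSpace n k) := Fintype.card_pos_iff.2
    ⟨fun i _ => ⟨0, hkpos i⟩⟩
  have hcardP : ∀ P : LSpace n k → Prop,
      ({ω : LSpace n k | P ω}).ncard = Nat.card {ω : LSpace n k // P ω} := by
    intro P
    rw [← Nat.card_coe_set_eq]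
    rfl
  set N := Fintype.card (LSpace n k) with hNdef
  set P2 := ∏ i, (k i) ^ (T i).card with hP2def
  set P1 := ∏ i, k i with hP1def
  have hP2pos : 0 < P2 := Finset.prod_pos fun i _ => pow_pos (hkpos i) _
  have hP1pos : 0 < P1 := Finset.prod_pos fun i _ => hkpos i
  have hNposR : (0:ℝ) < (N:ℝ) := by exact_mod_cast hNpos
  have hNne : (N:ℝ) ≠ 0 := ne_of_gt hNposR
  -- sticky count
  have hstc : {ω : LSpace n k | Sticky ω}.ncard * P2 = N := by
    rw [hcardP, Nat.card_congr (Equiv.subtypeEquivRight hStickyCyl)]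
    exact line_cyl T F
  have hT4 : ∀ i, (T i).card ≤ 4 := by
    intro i
    have h1 := Finset.card_insert_le (hproj i p00)
      ({hproj i p01, hproj i p11, hproj i p10} : Finset (HLine n k i))
    have h2 := Finset.card_insert_le (hproj i p01)
      ({hproj i p11, hproj i p10} : Finset (HLine n k i))
    have h3 := Finset.card_insert_le (hproj i p11)
      ({hproj i p10} : Finset (HLine n k i))
    have h4 : ({hproj i p10} : Finset (HLine n k i)).card = 1 := Finset.card_singleton _
    simp only [hT]
    omega
  -- generic: from count * P = N derive count / N = P⁻¹ in the reals
  have hdiv : ∀ (c P : ℕ), 0 < P → c * P = N → (c:ℝ) / N = ((P:ℝ))⁻¹ := by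
    intro c P hP hcP
    have hPR : (0:ℝ) < (P:ℝ) := by exact_mod_cast hP
    have hcR : (c:ℝ) * P = N := by exact_mod_cast hcP
    have hc : (c:ℝ) = N / P := by
      rw [eq_div_iff (ne_of_gt hPR)]
      exact hcR
    rw [hc, div_right_comm, div_self hNne, one_div]
  -- conjunct 1
  have conj1 : ∏ i, ((k i : ℝ) ^ (4:ℕ))⁻¹ ≤
      ({ω : LSpace n k | Sticky ω}.ncard : ℝ) / N := by
    rw [hdiv _ _ hP2pos hstc, Finset.prod_inv_distrib]
    have hle : (P2:ℝ) ≤ ∏ i, ((k i:ℝ))^(4:ℕ) := by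
      have : P2 ≤ ∏ i, (k i)^(4:ℕ) := by
        rw [hP2def]
        exact Finset.prod_le_prod (fun i _ => Nat.zero_le _)
          (fun i _ => Nat.pow_le_pow_right (hkpos i) (hT4 i))
      exact_mod_cast this
    have hP2R : (0:ℝ) < (P2:ℝ) := by exact_mod_cast hP2pos
    exact inv_anti₀ hP2R hle
  -- conjunct 2 : a vertex all of whose lines avoid C
  have hc2 : ∃ z : GVert n k, ∀ (i : Fin n) (t : Fin (k i)), Function.update z i t ∉ C := by
    have h2n : (2:ℕ) < n := by omega
    have h3n : (3:ℕ) < n := by omega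
    have hc2ne0 : (⟨2, h2n⟩ : Fin n) ≠ c₀ := by
      intro h; rw [Fin.ext_iff] at h; simp [hc₀] at h
    have hc2ne1 : (⟨2, h2n⟩ : Fin n) ≠ c₁ := by
      intro h; rw [Fin.ext_iff] at h; simp [hc₁] at h
    have hc3ne0 : (⟨3, h3n⟩ : Fin n) ≠ c₀ := by
      intro h; rw [Fin.ext_iff] at h; simp [hc₀] at h
    have hc3ne1 : (⟨3, h3n⟩ : Fin n) ≠ c₁ := by
      intro h; rw [Fin.ext_iff] at h; simp [hc₁] at h
    have hc23 : (⟨2, h2n⟩ : Fin n) ≠ (⟨3, h3n⟩ : Fin n) := by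
      intro h; rw [Fin.ext_iff] at h; simp at h
    obtain ⟨t₂, ht₂⟩ := Fintype.exists_ne_of_one_lt_card
      (by rw [Fintype.card_fin]; have := hk (⟨2, h2n⟩ : Fin n); omega) (w ⟨2, h2n⟩)
    obtain ⟨t₃, ht₃⟩ := Fintype.exists_ne_of_one_lt_card
      (by rw [Fintype.card_fin]; have := hk (⟨3, h3n⟩ : Fin n); omega) (w ⟨3, h3n⟩)
    refine ⟨Function.update (Function.update w ⟨2, h2n⟩ t₂) ⟨3, h3n⟩ t₃, ?_⟩
    intro i t hmem
    set z := Function.update (Function.update w ⟨2, h2n⟩ t₂) ⟨3, h3n⟩ t₃ with hzdef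
    have hz2 : z ⟨2, h2n⟩ = t₂ := by
      rw [hzdef, Function.update_of_ne hc23, Function.update_self]
    have hz3 : z ⟨3, h3n⟩ = t₃ := by
      rw [hzdef, Function.update_self]
    have hu2 : Function.update z i t ⟨2, h2n⟩ = w ⟨2, h2n⟩ :=
      hCval _ hmem _ hc2ne0 hc2ne1
    have hu3 : Function.update z i t ⟨3, h3n⟩ = w ⟨3, h3n⟩ :=
      hCval _ hmem _ hc3ne0 hc3ne1
    by_cases hi : (⟨2, h2n⟩ : Fin n) = i
    · have : Function.update z i t ⟨3, h3n⟩ = z ⟨3, h3n⟩ :=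
        Function.update_of_ne (by rw [← hi]; exact fun h => hc23 h.symm) _ _
      rw [this, hz3] at hu3
      exact ht₃ hu3
    · have : Function.update z i t ⟨2, h2n⟩ = z ⟨2, h2n⟩ :=
        Function.update_of_ne hi _ _
      rw [this, hz2] at hu2
      exact ht₂ hu2
  -- conjunct 3
  have hc3 : ∀ z : GVert n k, (∀ (i : Fin n) (t : Fin (k i)), Function.update z i t ∉ C) →
      ({ω : LSpace n k | IsSink ω z}.ncard : ℝ) / N = (∏ i, ((k i : ℝ))⁻¹) ∧
      {ω : LSpace n k | IsSink ω z ∧ Sticky ω}.ncard * N =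
        {ω : LSpace n k | IsSink ω z}.ncard * {ω : LSpace n k | Sticky ω}.ncard := by
    intro z hz
    have hzT : ∀ i, hproj i z ∉ T i := by
      intro i hmem
      simp only [hT, Finset.mem_insert, Finset.mem_singleton] at hmem
      have key : ∀ u : GVert n k, u ∈ C → hproj i z = hproj i u → False := by
        intro u hu hpe
        have hue : u = Function.update z i (u i) := by
          funext j
          by_cases hj : j = i
          · rw [hj, Function.update_self]
          · rw [Function.update_of_ne hj]
            exact ((hproj_eq_iff i z u).1 hpe j hj).symm
        exact hz i (u i) (hue ▸ hu)
      rcases hmem with h | h | h | h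
      · exact key p00 m0 h
      · exact key p01 m1 h
      · exact key p11 m2 h
      · exact key p10 m3 h
    -- sink count
    have hsinkCyl : ∀ ω : LSpace n k, IsSink ω z ↔
        ∀ i, ∀ ℓ ∈ ({hproj i z} : Finset (HLine n k i)), ω i ℓ = z i := by
      intro ω
      rw [sink_iff]
      constructor
      · intro h i ℓ hℓ
        rw [Finset.mem_singleton] at hℓ
        rw [hℓ]
        exact h i
      · intro h i
        exact h i _ (Finset.mem_singleton_self _)
    have hsc : {ω : LSpace n k | IsSink ω z}.ncard * P1 = N := by
      rw [hcardP, Nat.card_congr (Equiv.subtypeEquivRight hsinkCyl)]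
      have := line_cyl (fun i => ({hproj i z} : Finset (HLine n k i))) (fun i _ => z i)
      rw [hNdef, ← this]
      congr 1
      rw [hP1def]
      exact Finset.prod_congr rfl fun i _ => by rw [Finset.card_singleton, pow_one]
    refine ⟨hdiv _ _ hP1pos hsc |>.trans ?_, ?_⟩
    · rw [Finset.prod_inv_distrib]
      congr 1
      rw [hP1def]
      push_cast
      rfl
    -- independence
    · have hbothCyl : ∀ ω : LSpace n k, (IsSink ω z ∧ Sticky ω) ↔
          ∀ i, ∀ ℓ ∈ insert (hproj i z) (T i),
            ω i ℓ = (if ℓ = hproj i z then z i else F i ℓ) := by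
        intro ω
        constructor
        · rintro ⟨hs, hst⟩ i ℓ hℓ
          rcases Finset.mem_insert.1 hℓ with h | h
          · rw [h, if_pos rfl]
            exact (sink_iff ω z).1 hs i
          · have hne : ℓ ≠ hproj i z := by
              intro e
              rw [e] at h
              exact hzT i h
            rw [if_neg hne]
            exact (hStickyCyl ω).1 hst i ℓ h
        · intro h
          constructor
          · rw [sink_iff]
            intro i
            have := h i (hproj i z) (Finset.mem_insert_self _ _)
            rwa [if_pos rfl] at this
          · rw [hStickyCyl]
            intro i ℓ hℓ
            have hne : ℓ ≠ hproj i z := by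
              intro e
              rw [e] at hℓ
              exact hzT i hℓ
            have := h i ℓ (Finset.mem_insert_of_mem hℓ)
            rwa [if_neg hne] at this
      have hbc : {ω : LSpace n k | IsSink ω z ∧ Sticky ω}.ncard * (P2 * P1) = N := by
        rw [hcardP, Nat.card_congr (Equiv.subtypeEquivRight hbothCyl)]
        have := line_cyl (fun i => insert (hproj i z) (T i))
          (fun i ℓ => if ℓ = hproj i z then z i else F i ℓ)
        rw [hNdef, ← this]
        congr 1
        rw [hP2def, hP1def, ← Finset.prod_mul_distrib]
        refine Finset.prod_congr rfl fun i _ => ?_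
        rw [Finset.card_insert_of_notMem (hzT i), pow_succ]
      set cb := {ω : LSpace n k | IsSink ω z ∧ Sticky ω}.ncard
      set cz := {ω : LSpace n k | IsSink ω z}.ncard
      set cst := {ω : LSpace n k | Sticky ω}.ncard
      have e1 : cb * P2 = cz := by
        have h1 : (cb * P2) * P1 = cz * P1 := by
          rw [hsc, ← hbc]; ring
        exact Nat.eq_of_mul_eq_mul_right hP1pos h1
      calc cb * N = cb * (cst * P2) := by rw [hstc]
        _ = cst * (cb * P2) := by ring
        _ = cst * cz := by rw [e1]
        _ = cz * cst := mul_comm _ _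
  obtain ⟨z, hz⟩ := hc2
  obtain ⟨rz, hind⟩ := hc3 z hz
  -- conjunct 4
  have conj4 : ∏ i, ((k i : ℝ) ^ (5:ℕ))⁻¹ ≤
      ({ω : LSpace n k | (∃ s, IsSink ω s) ∧ Sticky ω}.ncard : ℝ) / N := by
    set cb := {ω : LSpace n k | IsSink ω z ∧ Sticky ω}.ncard with hcb
    set cz := {ω : LSpace n k | IsSink ω z}.ncard with hcz
    set cst := {ω : LSpace n k | Sticky ω}.ncard with hcst
    set cbig := {ω : LSpace n k | (∃ s, IsSink ω s) ∧ Sticky ω}.ncard with hcbig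
    have hmono : cb ≤ cbig := by
      apply Set.ncard_le_ncard
      · rintro ω ⟨h1, h2⟩
        exact ⟨⟨z, h1⟩, h2⟩
      · exact Set.toFinite _
    have hindR : (cb:ℝ) * N = (cz:ℝ) * cst := by exact_mod_cast hind
    have hsplit : (cb:ℝ) / N = ((cz:ℝ)/N) * ((cst:ℝ)/N) := by
      rw [div_mul_div_comm, div_eq_div_iff hNne (mul_ne_zero hNne hNne)]
      rw [show (cb:ℝ) * ((N:ℝ) * N) = ((cb:ℝ) * N) * N from by ring, hindR]
    have h5 : ∏ i, ((k i : ℝ) ^ (5:ℕ))⁻¹ =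
        (∏ i, ((k i:ℝ))⁻¹) * ∏ i, ((k i : ℝ) ^ (4:ℕ))⁻¹ := by
      rw [← Finset.prod_mul_distrib]
      refine Finset.prod_congr rfl fun i _ => ?_
      rw [show (k i:ℝ)^(5:ℕ) = (k i:ℝ) * (k i:ℝ)^(4:ℕ) from by ring, mul_inv]
    rw [h5]
    have step1 : (∏ i, ((k i:ℝ))⁻¹) * ∏ i, ((k i : ℝ) ^ (4:ℕ))⁻¹ ≤
        ((cz:ℝ)/N) * ((cst:ℝ)/N) := by
      rw [rz]
      apply mul_le_mul_of_nonneg_left conj1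
      positivity
    refine le_trans step1 ?_
    rw [← hsplit]
    have : (cb:ℝ) ≤ (cbig:ℝ) := by exact_mod_cast hmono
    exact (div_le_div_iff_of_pos_right hNposR).2 this
  -- conjunct 5
  have conj5 : ∀ ω : LSpace n k, (∃ s, IsSink ω s) → Sticky ω →
      ¬ (∀ v : GVert n k, ∃ s, IsSink ω s ∧ Relation.ReflTransGen (BREdge ω) v s) := by
    intro ω _ hst hall
    obtain ⟨s, hs, hreach⟩ := hall p00
    obtain ⟨e1, e2, e3, e4, hcl⟩ := hst
    have hsC : s ∈ C := hcl p00 m0 s hreach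
    rcases (hCmem s).1 hsC with h | h | h | h
    · exact (h ▸ hs) p01 e1
    · exact (h ▸ hs) p11 e2
    · exact (h ▸ hs) p10 e3
    · exact (h ▸ hs) p00 e4
  exact ⟨conj1, ⟨z, hz⟩, hc3, conj4, conj5⟩
end
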